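/- Let X be a probability space, n a positive integer, and f ∈ L^∞(X^n) with generalized Walsh expansion f = Σ_{S ⊆ [n]} F_S. Then for every S ⊆ [n], ‖F_S‖_∞ ≤ 2^{|S|} ‖f‖_∞. -/

import Mathlib

/-!
Write `E_i` for integration in the `i`-th coordinate. The defining properties of the expansion say
that `E_i F_T = 0` when `i ∈ T` and `E_i F_T = F_T` when `i ∉ T`, so `E_i` and `I - E_i` act on
`f = Σ_T F_T` by keeping exactly the terms with `i ∉ T`, resp. `i ∈ T`. Hence
`F_S = ∏_{i ∈ S} (I - E_i) ∏_{i ∉ S} E_i f`. Each `E_i` is a contraction on `L^∞` and each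
`I - E_i` has norm at most `2`, which gives `‖F_S‖_∞ ≤ 2^{|S|} ‖f‖_∞`.
-/

open MeasureTheory Function Finset

theorem preimage_update_univ_pi {ι : Type*} [DecidableEq ι] {α : ι → Type*} (i : ι)
    (s : ∀ j, Set (α j)) :
    (fun p : (∀ j, α j) × α i => update p.1 i p.2) ⁻¹' Set.univ.pi s =
      Set.univ.pi (update s i Set.univ) ×ˢ s i := by
  ext ⟨x, t⟩
  simp only [Set.mem_preimage, Set.mem_univ_pi, Set.mem_prod]
  constructor
  · intro h
    refine ⟨fun j => ?_, by simpa using h i⟩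
    rcases eq_or_ne j i with rfl | hj
    · simp
    · simpa [hj] using h j
  · rintro ⟨hx, ht⟩ j
    rcases eq_or_ne j i with rfl | hj
    · simpa using ht
    · simpa [hj] using hx j

section UpdateCoordinate

variable {ι : Type*} [Fintype ι] [DecidableEq ι] {α : ι → Type*} [∀ i, MeasurableSpace (α i)]
  (μ : ∀ i, Measure (α i)) [∀ i, IsProbabilityMeasure (μ i)]

theorem measurePreserving_update (i : ι) :
    MeasurePreserving (fun p : (∀ j, α j) × α i => update p.1 i p.2)
      ((Measure.pi μ).prod (μ i)) (Measure.pi μ) := by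
  refine ⟨measurable_update', (Measure.pi_eq fun s hs => ?_).symm⟩
  have hupdate : ∀ j, μ j (update s i Set.univ j) = update (fun j => μ j (s j)) i 1 j := by
    intro j
    rcases eq_or_ne j i with rfl | hj
    · simp
    · simp [hj]
  rw [Measure.map_apply measurable_update' (.univ_pi hs), preimage_update_univ_pi,
    Measure.prod_prod, Measure.pi_pi]
  simp_rw [hupdate]
  rw [prod_update_of_mem (mem_univ i), one_mul, sdiff_singleton_eq_erase,
    prod_erase_mul _ _ (mem_univ i)]

theorem ae_ae_update (i : ι) {p : (∀ j, α j) → Prop} (h : ∀ᵐ x ∂Measure.pi μ, p x) :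
    ∀ᵐ x ∂Measure.pi μ, ∀ᵐ t ∂μ i, p (update x i t) :=
  Measure.ae_ae_of_ae_prod ((measurePreserving_update μ i).quasiMeasurePreserving.ae h)

theorem ae_integrable_update {E : Type*} [NormedAddCommGroup E] (i : ι) {g : (∀ j, α j) → E}
    (hg : Integrable g (Measure.pi μ)) :
    ∀ᵐ x ∂Measure.pi μ, Integrable (fun t => g (update x i t)) (μ i) :=
  ((measurePreserving_update μ i).integrable_comp_of_integrable hg).prod_right_ae

end UpdateCoordinate

section Marginal

variable {ι : Type*} [Fintype ι] [DecidableEq ι] {α : ι → Type*} [∀ i, MeasurableSpace (α i)]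
  (μ : ∀ i, Measure (α i)) {E : Type*} [NormedAddCommGroup E] [NormedSpace ℝ E]

/-- The paper's `E_i`: the Bochner analogue of `lmarginal` over the single coordinate `i`. -/
noncomputable def marginalAt (i : ι) (g : (∀ j, α j) → E) : (∀ j, α j) → E :=
  fun x => ∫ t, g (update x i t) ∂μ i

omit [Fintype ι] in
theorem marginalAt_of_dependsOn [CompleteSpace E] {g : (∀ j, α j) → E} {s : Set ι}
    (hg : DependsOn g s) {i : ι} [IsProbabilityMeasure (μ i)] (hi : i ∉ s) :
    marginalAt μ i g = g := by
  funext x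
  have hconst : ∀ t, g (update x i t) = g x := fun t =>
    hg fun j hj => update_of_ne (ne_of_mem_of_not_mem hj hi) _ _
  simp [marginalAt, hconst]

variable [∀ i, IsProbabilityMeasure (μ i)]

theorem marginalAt_congr_ae (i : ι) {g h : (∀ j, α j) → E} (hgh : g =ᵐ[Measure.pi μ] h) :
    marginalAt μ i g =ᵐ[Measure.pi μ] marginalAt μ i h := by
  filter_upwards [ae_ae_update μ i hgh] with x hx
  exact integral_congr_ae hx

theorem ae_enorm_marginalAt_le (i : ι) {g : (∀ j, α j) → E} {C : ENNReal}
    (hg : ∀ᵐ x ∂Measure.pi μ, ‖g x‖ₑ ≤ C) :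
    ∀ᵐ x ∂Measure.pi μ, ‖marginalAt μ i g x‖ₑ ≤ C := by
  filter_upwards [ae_ae_update μ i hg] with x hx
  calc ‖marginalAt μ i g x‖ₑ ≤ ∫⁻ t, ‖g (update x i t)‖ₑ ∂μ i :=
        enorm_integral_le_lintegral_enorm _
    _ ≤ ∫⁻ _, C ∂μ i := lintegral_mono_ae hx
    _ = C := by simp

theorem marginalAt_finsetSum {κ : Type*} (i : ι) (A : Finset κ) {g : κ → (∀ j, α j) → E}
    (hg : ∀ k ∈ A, Integrable (g k) (Measure.pi μ)) :
    marginalAt μ i (fun x => ∑ k ∈ A, g k x) =ᵐ[Measure.pi μ]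
      fun x => ∑ k ∈ A, marginalAt μ i (g k) x := by
  have hslices : ∀ᵐ x ∂Measure.pi μ, ∀ k ∈ A, Integrable (fun t => g k (update x i t)) (μ i) :=
    (Filter.eventually_all_finset A).2 fun k hk => ae_integrable_update μ i (hg k hk)
  filter_upwards [hslices] with x hx
  exact integral_finsetSum A hx

end Marginal

section Walsh

variable {ι : Type*} [Fintype ι] [DecidableEq ι] {α : ι → Type*} [∀ i, MeasurableSpace (α i)]
  (μ : ∀ i, Measure (α i)) {E : Type*} [NormedAddCommGroup E] [NormedSpace ℝ E]

/-- `walshProj μ S l = ∏_{i ∈ l} P_i` with `P_i = I - E_i` for `i ∈ S` and `P_i = E_i` otherwise. -/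
noncomputable def walshProj (S : Finset ι) : List ι → ((∀ j, α j) → E) → (∀ j, α j) → E
  | [] => id
  | i :: l => fun g =>
      if i ∈ S then walshProj S l g - marginalAt μ i (walshProj S l g)
      else marginalAt μ i (walshProj S l g)

theorem ae_enorm_walshProj_le [∀ i, IsProbabilityMeasure (μ i)] (S : Finset ι) (l : List ι)
    {g : (∀ j, α j) → E} {C : ENNReal} (hg : ∀ᵐ x ∂Measure.pi μ, ‖g x‖ₑ ≤ C) :
    ∀ᵐ x ∂Measure.pi μ, ‖walshProj μ S l g x‖ₑ ≤ 2 ^ (l.filter (· ∈ S)).length * C := by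
  induction l with
  | nil => simpa [walshProj] using hg
  | cons i l ih =>
    by_cases hi : i ∈ S
    · filter_upwards [ih, ae_enorm_marginalAt_le μ i ih] with x hx hmx
      calc ‖walshProj μ S (i :: l) g x‖ₑ
          ≤ ‖walshProj μ S l g x‖ₑ + ‖marginalAt μ i (walshProj μ S l g) x‖ₑ := by
            simpa [walshProj, hi] using enorm_sub_le
        _ ≤ 2 ^ (l.filter (· ∈ S)).length * C + 2 ^ (l.filter (· ∈ S)).length * C :=
            add_le_add hx hmx
        _ = 2 ^ ((i :: l).filter (· ∈ S)).length * C := by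
            simp [hi, pow_succ]; ring
    · simpa [walshProj, List.filter_cons, hi] using ae_enorm_marginalAt_le μ i ih

structure IsWalshExpansion (f : (∀ i, α i) → E) (F : Finset ι → (∀ i, α i) → E) : Prop where
  integrable (T : Finset ι) : Integrable (F T) (Measure.pi μ)
  dependsOn (T : Finset ι) : DependsOn (F T) T
  marginalAt_eq_zero (T : Finset ι) : ∀ i ∈ T, ∀ᵐ x ∂Measure.pi μ, marginalAt μ i (F T) x = 0
  ae_eq_sum : ∀ᵐ x ∂Measure.pi μ, f x = ∑ T, F T x

namespace IsWalshExpansion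

variable {μ} [∀ i, IsProbabilityMeasure (μ i)] [CompleteSpace E] {f : (∀ i, α i) → E}
  {F : Finset ι → (∀ i, α i) → E}

theorem marginalAt_sum (h : IsWalshExpansion μ f F) (i : ι) (A : Finset (Finset ι)) :
    marginalAt μ i (fun x => ∑ T ∈ A, F T x) =ᵐ[Measure.pi μ]
      fun x => ∑ T ∈ A with i ∉ T, F T x := by
  have hzero : ∀ᵐ x ∂Measure.pi μ, ∀ T ∈ A.filter (i ∈ ·), marginalAt μ i (F T) x = 0 :=
    (Filter.eventually_all_finset _).2 fun T hT => h.marginalAt_eq_zero T i (mem_filter.1 hT).2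
  filter_upwards [marginalAt_finsetSum μ i A fun T _ => h.integrable T, hzero] with x hsum hzero
  rw [hsum, ← sum_filter_add_sum_filter_not A (i ∈ ·), sum_eq_zero hzero, zero_add]
  exact sum_congr rfl fun T hT => by
    rw [marginalAt_of_dependsOn μ (h.dependsOn T) (mem_filter.1 hT).2]

theorem walshProj_ae_eq (h : IsWalshExpansion μ f F) (S : Finset ι) (l : List ι) :
    walshProj μ S l f =ᵐ[Measure.pi μ]
      fun x => ∑ T with ∀ i ∈ l, (i ∈ T ↔ i ∈ S), F T x := by
  induction l with
  | nil => exact h.ae_eq_sum.mono fun x hx => by simp [walshProj, hx]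
  | cons i l ih =>
    set A : Finset (Finset ι) := {T | ∀ j ∈ l, (j ∈ T ↔ j ∈ S)}
    have hA : ({T | ∀ j ∈ i :: l, (j ∈ T ↔ j ∈ S)} : Finset (Finset ι)) =
        {T ∈ A | i ∈ T ↔ i ∈ S} := by
      rw [filter_filter]
      exact filter_congr fun T _ => by simp [and_comm]
    have hmarginal := (marginalAt_congr_ae μ i ih).trans (h.marginalAt_sum i A)
    by_cases hi : i ∈ S
    · filter_upwards [ih, hmarginal] with x hx hmx
      have hsplit := sum_filter_add_sum_filter_not A (i ∈ ·) (F · x)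
      simp only [walshProj, hi, if_true, Pi.sub_apply, hx, hmx, hA, iff_true]
      rw [← hsplit, add_sub_cancel_right]
    · rw [hA]
      simpa only [walshProj, hi, if_false, iff_false] using hmarginal

theorem ae_eq_walshProj (h : IsWalshExpansion μ f F) (S : Finset ι) :
    F S =ᵐ[Measure.pi μ] walshProj μ S univ.toList f := by
  have hsingleton : ({T | ∀ i ∈ univ.toList, (i ∈ T ↔ i ∈ S)} : Finset (Finset ι)) = {S} := by
    ext T
    simp [Finset.ext_iff]
  have hproj := h.walshProj_ae_eq S univ.toList
  simp only [hsingleton, sum_singleton] at hproj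
  exact hproj.symm

theorem eLpNorm_top_le (h : IsWalshExpansion μ f F) (S : Finset ι) :
    eLpNorm (F S) ⊤ (Measure.pi μ) ≤ 2 ^ #S * eLpNorm f ⊤ (Measure.pi μ) := by
  have hcount : (univ.toList.filter (· ∈ S)).length = #S := by
    rw [← List.toFinset_card_of_nodup ((nodup_toList _).filter _), List.toFinset_filter,
      toList_toFinset]
    simp
  rw [eLpNorm_congr_ae (h.ae_eq_walshProj S), eLpNorm_exponent_top, eLpNorm_exponent_top,
    ← hcount]
  exact eLpNormEssSup_le_of_ae_enorm_bound (ae_enorm_walshProj_le μ S _ ae_le_eLpNormEssSup)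

end IsWalshExpansion

end Walsh

theorem walsh_linfty_bound_general {Ω : Type*} [MeasurableSpace Ω] (μ : Measure Ω)
    [IsProbabilityMeasure μ] (n : ℕ) (f : (Fin n → Ω) → ℂ)
    (F : Finset (Fin n) → ((Fin n → Ω) → ℂ))
    (hF2 : ∀ S, MemLp (F S) 2 (Measure.pi fun _ : Fin n => μ))
    (hFdep : ∀ S : Finset (Fin n), ∀ x y : Fin n → Ω, (∀ i ∈ S, x i = y i) → F S x = F S y)
    (hFzero : ∀ S : Finset (Fin n), ∀ i ∈ S, ∀ᵐ x ∂(Measure.pi fun _ : Fin n => μ),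
      ∫ t, F S (Function.update x i t) ∂μ = 0)
    (hsum : ∀ᵐ x ∂(Measure.pi fun _ : Fin n => μ), f x = ∑ S : Finset (Fin n), F S x)
    (S : Finset (Fin n)) :
    eLpNorm (F S) ⊤ (Measure.pi fun _ : Fin n => μ) ≤
      2 ^ S.card * eLpNorm f ⊤ (Measure.pi fun _ : Fin n => μ) :=
  IsWalshExpansion.eLpNorm_top_le
    ⟨fun S => (hF2 S).integrable one_le_two, fun S _ _ => hFdep S _ _, hFzero, hsum⟩ S

/-- If `f = Σ_{S ⊆ [n]} F_S` is the generalized Walsh expansion of `f ∈ L^∞(Xⁿ)`, then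
`‖F_S‖_∞ ≤ 2^{|S|} ‖f‖_∞` for every `S ⊆ [n]`. -/
theorem walsh_linfty_bound {Ω : Type*} [MeasurableSpace Ω] (μ : Measure Ω)
    [IsProbabilityMeasure μ] (n : ℕ) (hn : 0 < n) (f : (Fin n → Ω) → ℂ)
    (hf : MemLp f 2 (Measure.pi fun _ : Fin n => μ))
    (F : Finset (Fin n) → ((Fin n → Ω) → ℂ))
    (hF2 : ∀ S, MemLp (F S) 2 (Measure.pi fun _ : Fin n => μ))
    (hFdep : ∀ S : Finset (Fin n), ∀ x y : Fin n → Ω, (∀ i ∈ S, x i = y i) → F S x = F S y)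
    (hFzero : ∀ S : Finset (Fin n), ∀ i ∈ S, ∀ᵐ x ∂(Measure.pi fun _ : Fin n => μ),
      ∫ t, F S (Function.update x i t) ∂μ = 0)
    (hsum : ∀ᵐ x ∂(Measure.pi fun _ : Fin n => μ), f x = ∑ S : Finset (Fin n), F S x)
    (S : Finset (Fin n)) :
    eLpNorm (F S) ⊤ (Measure.pi fun _ : Fin n => μ) ≤
      2 ^ S.card * eLpNorm f ⊤ (Measure.pi fun _ : Fin n => μ) :=
  walsh_linfty_bound_general μ n f F hF2 hFdep hFzero hsum S
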